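/- arXiv:2504.09331 — 2 statements merged into one kernel-verified Lean document; each statement's English description precedes it below -/
import Mathlib

section
/- Let B ≥ 1, K ≥ 2, and set L = B/√(4K·ln⁺B) where ln⁺B = max(ln B, 1). If N ~ N(0,1), then the random variable {L·N}_B² has expectation at most 1/4 + C·B^{2−K} for a universal constant C, where {u}_B = u − ⌈u⌋_B with ⌈u⌋_B the B-truncated nearest-integer rounding. -/
open MeasureTheory ProbabilityTheory

/-- `B`-truncated rounding to the nearest integer. -/
noncomputable def roundB (B u : ℝ) : ℝ := if |u| ≤ B then (round u : ℝ) else B * Real.sign u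

/-- Rounding remainder. -/
noncomputable def fracB (B u : ℝ) : ℝ := u - roundB B u

/-!
Write `L = B / √(4s)` with `s = K · ln⁺B ≥ 1`. Where `|L x| ≤ B` the remainder is an honest
rounding error, so its square is at most `1/4`. Elsewhere the truncation only shrinks `|L x|`,
and `|L x| > B` forces `x²/4 > s`; then `(L x)² = B² · (x²/4)/s ≤ B² e^{-s} e^{x²/4}` because
`y/s ≤ e^{y-s}` for `1 ≤ s ≤ y`. Integrating this pointwise bound, with `E[e^{N²/4}] = √2`,
takes the place of Cauchy–Schwarz and the Gaussian tail bound; finally `B² e^{-s} ≤ B^{2-K}`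
since `ln B ≤ ln⁺B`.
-/

open Real
open scoped NNReal

lemma integral_exp_mul_sq_gaussianReal {v : ℝ≥0} (hv : v ≠ 0) {c : ℝ} (hc : 2 * c * v < 1) :
    ∫ x, exp (c * x ^ 2) ∂gaussianReal 0 v = (√(1 - 2 * c * v))⁻¹ := by
  have hv0 : (0 : ℝ) < v := by positivity
  have hpdf : ∀ x, gaussianPDFReal 0 v x • exp (c * x ^ 2)
      = (√(2 * π * v))⁻¹ * exp (-((1 - 2 * c * v) / (2 * v)) * x ^ 2) := by
    intro x
    rw [gaussianPDFReal, smul_eq_mul, mul_assoc, ← exp_add]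
    congr 2
    field_simp
    ring
  simp_rw [integral_gaussianReal_eq_integral_smul hv, hpdf, integral_const_mul, integral_gaussian]
  have hpos : 0 < √(2 * π * v) := by positivity
  rw [div_div_eq_mul_div, sqrt_div' _ (by linarith), ← div_eq_inv_mul, div_right_comm,
    show π * (2 * v) = 2 * π * v by ring, div_self hpos.ne', one_div]

lemma sq_fracB_le_of_abs_le {B u : ℝ} (h : |u| ≤ B) : fracB B u ^ 2 ≤ 1 / 4 := by
  rw [fracB, roundB, if_pos h, ← sq_abs]
  calc |u - round u| ^ 2 ≤ (1 / 2) ^ 2 := by gcongr; exact abs_sub_round u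
    _ = 1 / 4 := by norm_num

lemma sq_fracB_le_sq {B u : ℝ} (hB : 0 ≤ B) (h : B < |u|) : fracB B u ^ 2 ≤ u ^ 2 := by
  rw [fracB, roundB, if_neg h.not_ge]
  rcases lt_trichotomy u 0 with hu | hu | hu
  · rw [sign_of_neg hu, abs_of_neg hu] at *; nlinarith
  · simp [hu] at h; linarith
  · rw [sign_of_pos hu, abs_of_pos hu] at *; nlinarith

lemma div_le_exp_sub {s y : ℝ} (hs : 1 ≤ s) (hsy : s ≤ y) : y / s ≤ exp (y - s) := by
  have : (y - s) / s ≤ y - s := div_le_self (by linarith) hs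
  calc y / s = (y - s) / s + 1 := by field_simp; ring
    _ ≤ exp (y - s) := by linarith [add_one_le_exp (y - s)]

lemma sq_fracB_le {B s : ℝ} (hB : 0 ≤ B) (hs : 1 ≤ s) (x : ℝ) :
    fracB B (B / √(4 * s) * x) ^ 2 ≤ 1 / 4 + B ^ 2 * exp (-s) * exp (4⁻¹ * x ^ 2) := by
  set u := B / √(4 * s) * x
  have htail : 0 ≤ B ^ 2 * exp (-s) * exp (4⁻¹ * x ^ 2) := by positivity
  by_cases hu : |u| ≤ B
  · linarith [sq_fracB_le_of_abs_le hu]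
  push Not at hu
  have hu2 : u ^ 2 = B ^ 2 * (4⁻¹ * x ^ 2 / s) := by
    rw [mul_pow, div_pow, sq_sqrt (by linarith)]; ring
  have hsx : s ≤ 4⁻¹ * x ^ 2 := by
    have : B ^ 2 * 1 < B ^ 2 * (4⁻¹ * x ^ 2 / s) := by
      rw [← hu2, mul_one, ← sq_abs u]; gcongr
    exact ((one_lt_div (by linarith)).mp (lt_of_mul_lt_mul_left this (sq_nonneg B))).le
  calc fracB B u ^ 2 ≤ u ^ 2 := sq_fracB_le_sq hB hu
    _ ≤ B ^ 2 * exp (4⁻¹ * x ^ 2 - s) := by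
      rw [hu2]; gcongr; exact div_le_exp_sub hs hsx
    _ ≤ 1 / 4 + B ^ 2 * exp (-s) * exp (4⁻¹ * x ^ 2) := by
      rw [sub_eq_neg_add, exp_add]; linarith

lemma integral_sq_fracB_le {B s : ℝ} (hB : 0 ≤ B) (hs : 1 ≤ s) :
    ∫ x, fracB B (B / √(4 * s) * x) ^ 2 ∂gaussianReal 0 1 ≤ 1 / 4 + √2 * (B ^ 2 * exp (-s)) := by
  have hmgf := integral_exp_mul_sq_gaussianReal one_ne_zero (c := 4⁻¹) (by norm_num)
  rw [show 1 - 2 * 4⁻¹ * ((1 : ℝ≥0) : ℝ) = 2⁻¹ by norm_num, sqrt_inv, inv_inv] at hmgf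
  have hint : Integrable (fun x ↦ exp (4⁻¹ * x ^ 2)) (gaussianReal 0 1) :=
    .of_integral_ne_zero (by rw [hmgf]; positivity)
  calc ∫ x, fracB B (B / √(4 * s) * x) ^ 2 ∂gaussianReal 0 1
      ≤ ∫ x, (1 / 4 + B ^ 2 * exp (-s) * exp (4⁻¹ * x ^ 2)) ∂gaussianReal 0 1 :=
        integral_mono_of_nonneg (.of_forall fun _ ↦ sq_nonneg _)
          ((integrable_const _).add (hint.const_mul _)) (.of_forall (sq_fracB_le hB hs))
    _ = 1 / 4 + √2 * (B ^ 2 * exp (-s)) := by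
      rw [integral_add (integrable_const _) (hint.const_mul _), integral_const_mul, hmgf]
      simp [mul_comm]

lemma sq_mul_exp_neg_mul_le_rpow {B K m : ℝ} (hB : 0 < B) (hK : 0 ≤ K) (hm : log B ≤ m) :
    B ^ 2 * exp (-(K * m)) ≤ B ^ (2 - K) := by
  rw [sub_eq_add_neg, rpow_add hB, rpow_two, rpow_def_of_pos hB]
  gcongr
  nlinarith

theorem stmt12 :
    ∃ C : ℝ, 0 < C ∧
      ∀ (B K : ℝ), 1 ≤ B → 2 ≤ K →
        ∫ x, (fracB B ((B / Real.sqrt (4 * K * max (Real.log B) 1)) * x)) ^ 2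
            ∂(gaussianReal 0 1) ≤
          1 / 4 + C * B ^ (2 - K) := by
  refine ⟨√2, by positivity, fun B K hB hK ↦ ?_⟩
  have hs : 1 ≤ K * max (log B) 1 := by nlinarith [le_max_right (log B) 1]
  calc _ = ∫ x, fracB B (B / √(4 * (K * max (log B) 1)) * x) ^ 2 ∂gaussianReal 0 1 := by
        rw [mul_assoc]
    _ ≤ 1 / 4 + √2 * (B ^ 2 * exp (-(K * max (log B) 1))) :=
        integral_sq_fracB_le (by linarith) hs
    _ ≤ 1 / 4 + √2 * B ^ (2 - K) := by
        gcongr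
        exact sq_mul_exp_neg_mul_le_rpow (by linarith) (by linarith) (le_max_left _ _)
end

section
/- Let m ≥ 4, let N ~ N(0,1) and W ~ χ²_{m−1} be independent, and define T = |N| − W/(2m) if |N| ≤ m, and T = −√(m² + W) otherwise. Then E[T] ≥ 1/4. -/
/-!
Pointwise, `T ≥ |N| - 2N⁴/m³ - W/(2m)` whenever `W ≥ 0`: on `|N| ≤ m` the subtracted term is
nonnegative, and on `|N| > m` we have `√(m² + W) ≤ m + W/(2m)` and `2N⁴/m³ ≥ |N| + m`.
The right-hand side is a function of `N` minus a function of `W`, so its expectation is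
`√(2/π) - 6/m³ - (m-1)/(2m)`, using `E|N| = √(2/π)`, `E N⁴ = 3` (both from the Gamma integral)
and `E W = m - 1`. Since `√(2/π) ≥ 3/4` and `6/m³ ≤ 1/(2m)` for `m² ≥ 12`, this is at least `1/4`.
-/

open MeasureTheory ProbabilityTheory

noncomputable def chiSq (m : ℕ) : Measure ℝ :=
  (Measure.pi (fun _ : Fin m => gaussianReal 0 1)).map (fun x => ∑ i, (x i) ^ 2)

open Real

lemma integral_abs_rpow_gaussianReal {q : ℝ} (hq : -1 < q) :
    ∫ x, |x| ^ q ∂gaussianReal 0 1 = 2 ^ (q / 2) * Gamma ((q + 1) / 2) / √π := by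
  have hIoi := integral_rpow_mul_exp_neg_mul_rpow two_pos hq one_half_pos
  have hsymm := integral_comp_abs (f := fun t : ℝ => t ^ q * exp (-(1 / 2) * t ^ 2))
  simp only [rpow_two] at hIoi
  simp only [sq_abs] at hsymm
  calc ∫ x, |x| ^ q ∂gaussianReal 0 1
      = (√(2 * π))⁻¹ * ∫ x, |x| ^ q * exp (-(1 / 2) * x ^ 2) := by
        rw [integral_gaussianReal_eq_integral_smul one_ne_zero, ← integral_const_mul]
        congr 1 with x
        simp only [gaussianPDFReal, smul_eq_mul]
        push_cast
        ring_nf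
    _ = 2 ^ (q / 2) * Gamma ((q + 1) / 2) / √π := by
      rw [hsymm, hIoi, sqrt_mul zero_le_two, one_div, inv_rpow zero_le_two,
        ← rpow_neg zero_le_two, neg_div, neg_neg, sqrt_eq_rpow, add_div, rpow_add two_pos]
      have : 0 < √π := by positivity
      field_simp

lemma integral_abs_gaussianReal : ∫ x, |x| ∂gaussianReal 0 1 = √(2 / π) := by
  have h := integral_abs_rpow_gaussianReal (q := 1) (by norm_num)
  simp only [rpow_one, add_self_div_two, Gamma_one, mul_one] at h
  rw [h, sqrt_div zero_le_two, ← sqrt_eq_rpow]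

lemma integral_sq_gaussianReal : ∫ x, x ^ 2 ∂gaussianReal 0 1 = 1 := by
  have h := integral_abs_rpow_gaussianReal (q := 2) (by norm_num)
  have hΓ : Gamma (3 / 2) = √π / 2 := by
    rw [show (3 / 2 : ℝ) = 1 / 2 + 1 by norm_num, Gamma_add_one (by norm_num), Gamma_one_half_eq]
    ring
  have : √π ≠ 0 := by positivity
  norm_num [hΓ] at h
  rw [h]
  field_simp

lemma integral_pow_four_gaussianReal : ∫ x, x ^ 4 ∂gaussianReal 0 1 = 3 := by
  have h := integral_abs_rpow_gaussianReal (q := 4) (by norm_num)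
  have hΓ : Gamma (5 / 2) = 3 / 4 * √π := by
    rw [show (5 / 2 : ℝ) = 1 / 2 + 1 + 1 by norm_num, Gamma_add_one (by norm_num),
      Gamma_add_one (by norm_num), Gamma_one_half_eq]
    ring
  have : √π ≠ 0 := by positivity
  norm_num [hΓ, Even.pow_abs (by decide : Even 4)] at h
  rw [h]
  field_simp

lemma integrable_abs_gaussianReal : Integrable (fun x => |x|) (gaussianReal 0 1) :=
  (memLp_one_iff_integrable.1 (memLp_id_gaussianReal 1)).abs

lemma integrable_pow_gaussianReal (n : ℕ) : Integrable (fun x => x ^ n) (gaussianReal 0 1) := by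
  refine ((memLp_id_gaussianReal (μ := 0) (v := 1) n).integrable_norm_pow').mono' (by fun_prop) ?_
  exact ae_of_all _ fun x => by simp [norm_pow]

lemma measurable_sum_sq (k : ℕ) : Measurable fun x : Fin k → ℝ => ∑ i, x i ^ 2 := by
  fun_prop

instance (k : ℕ) : IsProbabilityMeasure (chiSq k) :=
  Measure.isProbabilityMeasure_map (measurable_sum_sq k).aemeasurable

lemma ae_nonneg_chiSq (k : ℕ) : ∀ᵐ w ∂chiSq k, 0 ≤ w :=
  (ae_map_iff (measurable_sum_sq k).aemeasurable measurableSet_Ici).2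
    (ae_of_all _ fun _ => Finset.sum_nonneg fun _ _ => sq_nonneg _)

lemma integrable_eval_sq_pi_gaussianReal {k : ℕ} (i : Fin k) :
    Integrable (fun x : Fin k → ℝ => x i ^ 2) (Measure.pi fun _ => gaussianReal 0 1) :=
  integrable_comp_eval (μ := fun _ : Fin k => gaussianReal 0 1) (i := i)
    (integrable_pow_gaussianReal 2)

lemma integrable_chiSq (k : ℕ) : Integrable (fun w => w) (chiSq k) := by
  refine (integrable_map_measure aestronglyMeasurable_id (measurable_sum_sq k).aemeasurable).2 ?_
  simpa [Function.comp_def] using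
    integrable_finsetSum _ fun i _ => integrable_eval_sq_pi_gaussianReal i

lemma integral_chiSq (k : ℕ) : ∫ w, w ∂chiSq k = k := by
  rw [chiSq, integral_map (f := fun w => w) (measurable_sum_sq k).aemeasurable
      aestronglyMeasurable_id,
    integral_finsetSum _ fun i _ => integrable_eval_sq_pi_gaussianReal i]
  simp [integral_comp_eval (μ := fun _ : Fin k => gaussianReal 0 1)
    (f := fun x : ℝ => x ^ 2) (by fun_prop), integral_sq_gaussianReal]

lemma integral_prod_fst_sub_snd {α β : Type*} [MeasurableSpace α] [MeasurableSpace β]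
    {μ : Measure α} {ν : Measure β} [IsProbabilityMeasure μ] [IsProbabilityMeasure ν]
    {f : α → ℝ} {g : β → ℝ} (hf : Integrable f μ) (hg : Integrable g ν) :
    ∫ p, (f p.1 - g p.2) ∂μ.prod ν = ∫ x, f x ∂μ - ∫ y, g y ∂ν := by
  rw [integral_sub (hf.comp_fst ν) (hg.comp_snd μ), integral_fun_fst, integral_fun_snd]
  simp

noncomputable def truncatedGain (M n w : ℝ) : ℝ :=
  if |n| ≤ M then |n| - w / (2 * M) else -√(M ^ 2 + w)

lemma measurable_truncatedGain (M : ℝ) : Measurable fun p : ℝ × ℝ => truncatedGain M p.1 p.2 :=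
  Measurable.ite (measurableSet_le (by fun_prop) measurable_const) (by fun_prop) (by fun_prop)

lemma truncatedGain_le_abs {M n w : ℝ} (hM : 0 ≤ M) (hw : 0 ≤ w) :
    truncatedGain M n w ≤ |n| := by
  unfold truncatedGain
  split_ifs
  · have : 0 ≤ w / (2 * M) := by positivity
    linarith
  · linarith [abs_nonneg n, sqrt_nonneg (M ^ 2 + w)]

lemma sqrt_sq_add_le {M w : ℝ} (hM : 0 < M) (hw : 0 ≤ w) : √(M ^ 2 + w) ≤ M + w / (2 * M) := by
  rw [sqrt_le_left (by positivity)]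
  have : M ^ 2 + w + (w / (2 * M)) ^ 2 = (M + w / (2 * M)) ^ 2 := by field_simp; ring
  nlinarith [sq_nonneg (w / (2 * M))]

lemma abs_add_le_of_lt_abs {M n : ℝ} (hM : 0 < M) (hn : M < |n|) :
    |n| + M ≤ 2 * n ^ 4 / M ^ 3 := by
  have h3 : M ^ 3 ≤ |n| ^ 3 := pow_le_pow_left₀ hM.le hn.le 3
  rw [le_div_iff₀ (by positivity), ← (Even.pow_abs (by decide : Even 4) n)]
  nlinarith [mul_le_mul_of_nonneg_left h3 (abs_nonneg n),
    mul_le_mul_of_nonneg_right hn.le (pow_nonneg hM.le 3)]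

lemma sub_le_truncatedGain {M n w : ℝ} (hM : 0 < M) (hw : 0 ≤ w) :
    |n| - 2 * n ^ 4 / M ^ 3 - w / (2 * M) ≤ truncatedGain M n w := by
  unfold truncatedGain
  split_ifs with hn
  · have : 0 ≤ 2 * n ^ 4 / M ^ 3 := by positivity
    linarith
  · linarith [abs_add_le_of_lt_abs hM (not_le.1 hn), sqrt_sq_add_le hM hw]

lemma three_quarters_le_sqrt_two_div_pi : 3 / 4 ≤ √(2 / π) := by
  rw [le_sqrt (by norm_num) (by positivity), le_div_iff₀ pi_pos]
  nlinarith [pi_lt_d2]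

lemma one_quarter_le_of_four_le {M : ℝ} (hM : 4 ≤ M) :
    1 / 4 ≤ √(2 / π) - 6 / M ^ 3 - (M - 1) / (2 * M) := by
  have hM0 : 0 < M := by linarith
  have : 6 / M ^ 3 ≤ 1 / (2 * M) := by
    have : 16 ≤ M ^ 2 := by nlinarith
    rw [div_le_div_iff₀ (by positivity) (by positivity)]
    nlinarith
  have : (M - 1) / (2 * M) = 1 / 2 - 1 / (2 * M) := by field_simp
  linarith [three_quarters_le_sqrt_two_div_pi]

/-- `T = |N| - W/(2m)` if `|N| ≤ m`, and `T = -√(m² + W)` otherwise, where `N ~ N(0,1)` and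
`W ~ χ²_{m-1}` are independent (modelled by the product measure). Then `E[T] ≥ 1/4`. -/
theorem stmt18 (m : ℕ) (hm : 4 ≤ m) :
    (1 / 4 : ℝ) ≤
      ∫ p : ℝ × ℝ,
        (if |p.1| ≤ (m : ℝ) then |p.1| - p.2 / (2 * m) else -Real.sqrt ((m : ℝ) ^ 2 + p.2))
        ∂((gaussianReal 0 1).prod (chiSq (m - 1))) := by
  set M : ℝ := (m : ℝ)
  have hM : (4 : ℝ) ≤ M := Nat.ofNat_le_cast.2 hm
  have hk : ((m - 1 : ℕ) : ℝ) = M - 1 := by rw [Nat.cast_sub (by omega), Nat.cast_one]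
  have hf : Integrable (fun n => |n| - 2 * n ^ 4 / M ^ 3) (gaussianReal 0 1) :=
    integrable_abs_gaussianReal.sub (((integrable_pow_gaussianReal 4).const_mul 2).div_const _)
  have hg : Integrable (fun w => w / (2 * M)) (chiSq (m - 1)) := (integrable_chiSq _).div_const _
  have hw : ∀ᵐ p ∂(gaussianReal 0 1).prod (chiSq (m - 1)), 0 ≤ p.2 :=
    Measure.quasiMeasurePreserving_snd.ae (ae_nonneg_chiSq _)
  have hG : Integrable (fun p : ℝ × ℝ => (|p.1| - 2 * p.1 ^ 4 / M ^ 3) - p.2 / (2 * M))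
      ((gaussianReal 0 1).prod (chiSq (m - 1))) := (hf.comp_fst _).sub (hg.comp_snd _)
  have hlow := hw.mono fun p hp => sub_le_truncatedGain (M := M) (n := p.1) (by linarith) hp
  have hup := hw.mono fun p hp => truncatedGain_le_abs (M := M) (n := p.1) (by linarith) hp
  have hT : Integrable (fun p : ℝ × ℝ => truncatedGain M p.1 p.2)
      ((gaussianReal 0 1).prod (chiSq (m - 1))) :=
    integrable_of_le_of_le (measurable_truncatedGain M).aestronglyMeasurable hlow hup hG
      (integrable_abs_gaussianReal.comp_fst _)
  calc (1 / 4 : ℝ) ≤ √(2 / π) - 6 / M ^ 3 - (M - 1) / (2 * M) := one_quarter_le_of_four_le hM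
    _ = ∫ p, ((|p.1| - 2 * p.1 ^ 4 / M ^ 3) - p.2 / (2 * M))
          ∂(gaussianReal 0 1).prod (chiSq (m - 1)) := by
      rw [integral_prod_fst_sub_snd hf hg, integral_sub integrable_abs_gaussianReal
        (((integrable_pow_gaussianReal 4).const_mul 2).div_const _), integral_div,
        integral_div, integral_const_mul, integral_abs_gaussianReal,
        integral_pow_four_gaussianReal, integral_chiSq, hk]
      ring
    _ ≤ ∫ p, truncatedGain M p.1 p.2 ∂(gaussianReal 0 1).prod (chiSq (m - 1)) :=
      integral_mono_ae hG hT hlow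
end
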